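/- arXiv:2602.15586 — 2 statements merged into one kernel-verified Lean document; each statement's English description precedes it below -/
import Mathlib

section
/- Let (Z_t)_{t ∈ ℤ} be a stationary 𝒵-valued process with β-mixing coefficients β(k), let a, μ ≥ 1 be integers with n = 2aμ, let M > 0, let ℱ be a finite set of measurable functions from 𝒵 to [0, M], and for each ℓ_f ∈ ℱ and j = 1, …, 2μ set h_f(B_j) = (1/a) Σ_{i=1}^a ℓ_f(Z_{a(j−1)+i}) and L(f) = E[ℓ_f(Z_1)]. Fix k ∈ {1, 2} and ε > 0, and let ν' be the product measure on (𝒵^a)^μ whose every factor is the law of the block (Z_1, …, Z_a). Then P( ∃ ℓ_f ∈ ℱ : L(f) − (1/μ) Σ_{j=0}^{μ−1} h_f(B_{k+2j}) ≥ ε ) ≤ ν'( ∃ ℓ_f ∈ ℱ : L(f) − (1/μ) Σ_{j=1}^{μ} h̃_f(j-th block) ≥ ε ) + (μ − 1) β(a), where h̃_f denotes the same block average applied to the coordinates of (𝒵^a)^μ. -/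
/-!
Number the selected blocks `X₀, …, X_{μ-1}`; by stationarity each has law `νb`. Two selected
blocks are separated by a full block of length `a`, so the joint law of `X_j` and its
predecessors `(X_i)_{i<j}` is within `β(a)` in total variation of the product of their laws.
Replacing the blocks one at a time by independent copies (induction on the number of blocks,
integrating the induction hypothesis over the last block) therefore changes the probability
of any measurable event by at most `β(a)` per step after the first. The deviation event is
measurable because `ℱ` is finite.
-/

open MeasureTheory ProbabilityTheory

/-- Total variation distance between two measures. -/
noncomputable def tvDist {α : Type*} [MeasurableSpace α] (μ ν : Measure α) : ℝ :=
  ⨆ A : {A : Set α // MeasurableSet A}, |(μ A).toReal - (ν A).toReal|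

/-- β-mixing coefficient of the process `Z` under `P`: the supremum over `t` of the
total variation distance between the joint law of `((Z s)_{s ≤ t}, (Z s)_{s ≥ t+k})`
and the product of the marginal laws. -/
noncomputable def betaMix {Ω 𝒵 : Type*} [MeasurableSpace Ω] [MeasurableSpace 𝒵]
    (P : Measure Ω) (Z : ℤ → Ω → 𝒵) (k : ℕ) : ℝ :=
  ⨆ t : ℤ, tvDist
    (P.map (fun ω => (fun s : {s : ℤ // s ≤ t} => Z s ω,
                      fun s : {s : ℤ // t + k ≤ s} => Z s ω)))
    ((P.map (fun ω => fun s : {s : ℤ // s ≤ t} => Z s ω)).prod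
      (P.map (fun ω => fun s : {s : ℤ // t + k ≤ s} => Z s ω)))

/-- Stationarity of the process `Z` under `P`. -/
def Stationary {Ω 𝒵 : Type*} [MeasurableSpace Ω] [MeasurableSpace 𝒵]
    (P : Measure Ω) (Z : ℤ → Ω → 𝒵) : Prop :=
  ∀ s : ℤ, P.map (fun ω => fun t : ℤ => Z (t + s) ω) = P.map (fun ω => fun t : ℤ => Z t ω)

open scoped ENNReal

section TotalVariation

variable {α : Type*} [MeasurableSpace α]

lemma tvDist_nonneg (μ ν : Measure α) : 0 ≤ tvDist μ ν :=
  Real.iSup_nonneg fun _ => abs_nonneg _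

variable (μ ν : Measure α) [IsZeroOrProbabilityMeasure μ] [IsZeroOrProbabilityMeasure ν]

lemma abs_toReal_sub_toReal_le_one (A : Set α) : |(μ A).toReal - (ν A).toReal| ≤ 1 := by
  rw [← measureReal_def, ← measureReal_def, abs_sub_le_iff]
  constructor <;> linarith [measureReal_le_one (μ := μ) (s := A),
    measureReal_le_one (μ := ν) (s := A), measureReal_nonneg (μ := μ) (s := A),
    measureReal_nonneg (μ := ν) (s := A)]

lemma tvDist_le_one : tvDist μ ν ≤ 1 :=
  Real.iSup_le (fun A => abs_toReal_sub_toReal_le_one μ ν A) zero_le_one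

lemma apply_le_apply_add_tvDist {A : Set α} (hA : MeasurableSet A) :
    μ A ≤ ν A + ENNReal.ofReal (tvDist μ ν) := by
  have hsup : |(μ A).toReal - (ν A).toReal| ≤ tvDist μ ν :=
    le_ciSup (f := fun A : {A : Set α // MeasurableSet A} => |(μ A).toReal - (ν A).toReal|)
      ⟨1, by rintro _ ⟨B, rfl⟩; exact abs_toReal_sub_toReal_le_one μ ν B⟩
      (⟨A, hA⟩ : {A : Set α // MeasurableSet A})
  rw [← ENNReal.ofReal_toReal (measure_ne_top ν A),
    ← ENNReal.ofReal_add ENNReal.toReal_nonneg (tvDist_nonneg μ ν),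
    ENNReal.le_ofReal_iff_toReal_le (measure_ne_top μ A)
      (add_nonneg ENNReal.toReal_nonneg (tvDist_nonneg μ ν))]
  linarith [le_abs_self ((μ A).toReal - (ν A).toReal)]

end TotalVariation

instance MeasureTheory.Measure.prod.instIsZeroOrProbabilityMeasure {α β : Type*}
    [MeasurableSpace α] [MeasurableSpace β] {μ : Measure α} {ν : Measure β}
    [IsZeroOrProbabilityMeasure μ] [IsZeroOrProbabilityMeasure ν] :
    IsZeroOrProbabilityMeasure (μ.prod ν) := by
  rcases eq_zero_or_isProbabilityMeasure μ with rfl | _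
  · rw [Measure.zero_prod]
    infer_instance
  rcases eq_zero_or_isProbabilityMeasure ν with rfl | _
  · rw [Measure.prod_zero]
    infer_instance
  infer_instance

lemma MeasureTheory.Measure.prod_apply_le_prod_apply_add {α β : Type*} [MeasurableSpace α]
    [MeasurableSpace β] {ν : Measure α} [IsProbabilityMeasure ν] {ρ π : Measure β}
    [SFinite ρ] [SFinite π] {c : ℝ≥0∞} (h : ∀ A, MeasurableSet A → ρ A ≤ π A + c)
    {T : Set (α × β)} (hT : MeasurableSet T) :
    ν.prod ρ T ≤ ν.prod π T + c := by
  rw [Measure.prod_apply hT, Measure.prod_apply hT]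
  calc ∫⁻ x, ρ (Prod.mk x ⁻¹' T) ∂ν
      ≤ ∫⁻ x, (π (Prod.mk x ⁻¹' T) + c) ∂ν :=
        lintegral_mono fun x => h _ (measurable_prodMk_left hT)
    _ = ∫⁻ x, π (Prod.mk x ⁻¹' T) ∂ν + c := by
        rw [lintegral_add_right _ measurable_const, lintegral_const, measure_univ, mul_one]

section Hybrid

variable {Ω E : Type*} [MeasurableSpace Ω] [MeasurableSpace E]
  {P : Measure Ω} [SFinite P] {ν : Measure E} [IsProbabilityMeasure ν]
  {X : ℕ → Ω → E}

theorem map_pi_apply_le_pi_apply_add_mul (hX : ∀ j, Measurable (X j))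
    (hlaw : ∀ j, P.map (X j) = ν) {β : ℝ≥0∞}
    (hmix : ∀ j : ℕ, ∀ S, MeasurableSet S →
      P.map (fun ω => (X j ω, fun i : Fin j => X i ω)) S
        ≤ ((P.map (X j)).prod (P.map fun ω (i : Fin j) => X i ω)) S + β)
    (m : ℕ) {S : Set (Fin (m + 1) → E)} (hS : MeasurableSet S) :
    P.map (fun ω (i : Fin (m + 1)) => X i ω) S ≤ Measure.pi (fun _ => ν) S + m * β := by
  induction m with
  | zero =>
    have hbase : P.map (fun ω (i : Fin 1) => X i ω) = Measure.pi fun _ => ν := by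
      refine .trans ?_ (measurePreserving_funUnique ν (Fin 1)).symm.map_eq
      rw [← hlaw 0, Measure.map_map (MeasurableEquiv.measurable _) (hX 0)]
      congr with ω i
      rw [Fin.fin_one_eq_zero i]
      rfl
    exact (DFunLike.congr_fun hbase S).le.trans (by simp)
  | succ m ih =>
    set e := MeasurableEquiv.piFinSuccAbove (fun _ : Fin (m + 2) => E) (Fin.last (m + 1))
    have hpath : P.map (fun ω (i : Fin (m + 2)) => X i ω)
        = (P.map fun ω => (X (m + 1) ω, fun i : Fin (m + 1) => X i ω)).map e.symm := by
      have hjoint : Measurable fun ω => (X (m + 1) ω, fun i : Fin (m + 1) => X i ω) :=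
        (hX _).prodMk (measurable_pi_lambda _ fun i => hX i)
      rw [Measure.map_map e.symm.measurable hjoint]
      congr with ω i
      refine Fin.lastCases ?_ (fun i => ?_) i <;> simp [e]
    have hpi : Measure.pi (fun _ : Fin (m + 2) => ν)
        = (ν.prod (Measure.pi fun _ : Fin (m + 1) => ν)).map e.symm :=
      ((measurePreserving_piFinSuccAbove (fun _ => ν) (Fin.last (m + 1))).symm e).map_eq.symm
    have hT : MeasurableSet (e.symm ⁻¹' S) := e.symm.measurable hS
    rw [hpath, hpi, e.symm.map_apply, e.symm.map_apply]
    calc _ ≤ ((P.map (X (m + 1))).prod (P.map fun ω (i : Fin (m + 1)) => X i ω)) (e.symm ⁻¹' S)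
          + β := hmix _ _ hT
      _ ≤ ν.prod (Measure.pi fun _ : Fin (m + 1) => ν) (e.symm ⁻¹' S) + m * β + β := by
          rw [hlaw]
          gcongr
          exact Measure.prod_apply_le_prod_apply_add (fun A hA => ih hA) hT
      _ = _ := by push_cast; ring

end Hybrid

lemma betaMix_nonneg {Ω 𝒵 : Type*} [MeasurableSpace Ω] [MeasurableSpace 𝒵] (P : Measure Ω)
    (Z : ℤ → Ω → 𝒵) (k : ℕ) : 0 ≤ betaMix P Z k :=
  Real.iSup_nonneg fun _ => tvDist_nonneg _ _

section Blocks

variable {Ω 𝒵 : Type*} [MeasurableSpace Ω] [MeasurableSpace 𝒵] {P : Measure Ω}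
  {Z : ℤ → Ω → 𝒵}

/-- `(Z (c + 1), …, Z (c + a))`; the paper's block `B_j` is `block Z a (a * (j - 1))`. -/
def block (Z : ℤ → Ω → 𝒵) (a c : ℕ) : Ω → Fin a → 𝒵 :=
  fun ω i => Z ((c + i + 1 : ℕ) : ℤ) ω

lemma measurable_block (hZ : ∀ t, Measurable (Z t)) (a c : ℕ) : Measurable (block Z a c) :=
  measurable_pi_lambda _ fun _ => hZ _

lemma Stationary.map_comp_add (hstat : Stationary P Z) (hZ : ∀ t, Measurable (Z t))
    {ι : Type*} (g : ι → ℤ) (s : ℤ) :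
    P.map (fun ω i => Z (g i + s) ω) = P.map (fun ω i => Z (g i) ω) := by
  have hproj : Measurable fun x : ℤ → 𝒵 => fun i => x (g i) :=
    measurable_pi_lambda _ fun _ => measurable_pi_apply _
  have hshift : Measurable fun ω (t : ℤ) => Z (t + s) ω := measurable_pi_lambda _ fun _ => hZ _
  calc P.map (fun ω i => Z (g i + s) ω)
      = (P.map fun ω (t : ℤ) => Z (t + s) ω).map fun x i => x (g i) :=
        (Measure.map_map hproj hshift).symm
    _ = (P.map fun ω (t : ℤ) => Z t ω).map fun x i => x (g i) := by rw [hstat s]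
    _ = P.map (fun ω i => Z (g i) ω) := Measure.map_map hproj (measurable_pi_lambda _ hZ)

lemma Stationary.map_block (hstat : Stationary P Z) (hZ : ∀ t, Measurable (Z t)) (a c : ℕ) :
    P.map (block Z a c) = P.map (fun ω (i : Fin a) => Z (((i : ℕ) + 1 : ℕ) : ℤ) ω) := by
  rw [← hstat.map_comp_add hZ (fun i : Fin a => (((i : ℕ) + 1 : ℕ) : ℤ)) c]
  congr with ω i
  simp only [block]
  congr 1
  push_cast
  ring

lemma tvDist_le_betaMix [IsZeroOrProbabilityMeasure P] (k : ℕ) (t : ℤ) :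
    tvDist
      (P.map (fun ω => (fun s : {s : ℤ // s ≤ t} => Z s ω,
                        fun s : {s : ℤ // t + k ≤ s} => Z s ω)))
      ((P.map (fun ω => fun s : {s : ℤ // s ≤ t} => Z s ω)).prod
        (P.map (fun ω => fun s : {s : ℤ // t + k ≤ s} => Z s ω)))
      ≤ betaMix P Z k := by
  unfold betaMix
  apply le_ciSup (c := t)
  refine ⟨1, ?_⟩
  rintro _ ⟨t, rfl⟩
  exact tvDist_le_one _ _

lemma map_apply_le_prod_apply_add_betaMix [IsZeroOrProbabilityMeasure P]
    (hZ : ∀ t, Measurable (Z t)) (k : ℕ) (t : ℤ) {α β : Type*} [MeasurableSpace α]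
    [MeasurableSpace β] {F : ({s : ℤ // s ≤ t} → 𝒵) → α} (hF : Measurable F)
    {G : ({s : ℤ // t + k ≤ s} → 𝒵) → β} (hG : Measurable G) {S : Set (β × α)}
    (hS : MeasurableSet S) :
    P.map (fun ω => (G fun s => Z s ω, F fun s => Z s ω)) S
      ≤ ((P.map fun ω => G fun s => Z s ω).prod (P.map fun ω => F fun s => Z s ω)) S
        + ENNReal.ofReal (betaMix P Z k) := by
  have hpast : Measurable fun ω (s : {s : ℤ // s ≤ t}) => Z s ω :=
    measurable_pi_lambda _ fun _ => hZ _
  have hfuture : Measurable fun ω (s : {s : ℤ // t + k ≤ s}) => Z s ω :=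
    measurable_pi_lambda _ fun _ => hZ _
  have hΦ : Measurable fun p : _ × _ => (G p.2, F p.1) :=
    (hG.comp measurable_snd).prodMk (hF.comp measurable_fst)
  have hjoint : P.map (fun ω => (G fun s => Z s ω, F fun s => Z s ω))
      = (P.map fun ω => ((fun s : {s : ℤ // s ≤ t} => Z s ω),
          fun s : {s : ℤ // t + k ≤ s} => Z s ω)).map fun p => (G p.2, F p.1) := by
    rw [Measure.map_map hΦ (hpast.prodMk hfuture)]
    rfl
  have hprod : (P.map fun ω => G fun s => Z s ω).prod (P.map fun ω => F fun s => Z s ω)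
      = ((P.map fun ω (s : {s : ℤ // s ≤ t}) => Z s ω).prod
          (P.map fun ω (s : {s : ℤ // t + k ≤ s}) => Z s ω)).map fun p => (G p.2, F p.1) := by
    calc (P.map fun ω => G fun s => Z s ω).prod (P.map fun ω => F fun s => Z s ω)
        = ((P.map fun ω (s : {s : ℤ // t + k ≤ s}) => Z s ω).map G).prod
            ((P.map fun ω (s : {s : ℤ // s ≤ t}) => Z s ω).map F) := by
          rw [Measure.map_map hG hfuture, Measure.map_map hF hpast]
          rfl
      _ = ((P.map fun ω (s : {s : ℤ // t + k ≤ s}) => Z s ω).prod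
            (P.map fun ω (s : {s : ℤ // s ≤ t}) => Z s ω)).map (Prod.map G F) :=
          Measure.map_prod_map _ _ hG hF
      _ = _ := by
          rw [← Measure.prod_swap, Measure.map_map (hG.prodMap hF) measurable_swap]
          rfl
  rw [hjoint, hprod, Measure.map_apply hΦ hS, Measure.map_apply hΦ hS]
  calc _ ≤ _ := apply_le_apply_add_tvDist _ _ (hΦ hS)
    _ ≤ _ := by
      gcongr
      exact tvDist_le_betaMix k t

lemma map_block_apply_le_prod_apply_add_betaMix [IsZeroOrProbabilityMeasure P]
    (hZ : ∀ t, Measurable (Z t)) {a : ℕ} {c : ℕ → ℕ} (hc : ∀ i j, i < j → c i + 2 * a ≤ c j)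
    (j : ℕ) {S : Set ((Fin a → 𝒵) × (Fin j → Fin a → 𝒵))} (hS : MeasurableSet S) :
    P.map (fun ω => (block Z a (c j) ω, fun i : Fin j => block Z a (c i) ω)) S
      ≤ ((P.map (block Z a (c j))).prod (P.map fun ω (i : Fin j) => block Z a (c i) ω)) S
        + ENNReal.ofReal (betaMix P Z a) := by
  have hpast : ∀ (i : Fin j) (l : Fin a), ((c i + l + 1 : ℕ) : ℤ) ≤ (c j : ℤ) - a := by
    intro i l
    have := hc i j i.2
    have := l.2
    push_cast
    omega
  have hfuture : ∀ l : Fin a, (c j : ℤ) - a + (a : ℕ) ≤ ((c j + l + 1 : ℕ) : ℤ) := by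
    intro l
    push_cast
    omega
  exact map_apply_le_prod_apply_add_betaMix hZ a ((c j : ℤ) - a)
    (F := fun x i l => x ⟨_, hpast i l⟩)
    (measurable_pi_lambda _ fun _ => measurable_pi_lambda _ fun _ => measurable_pi_apply _)
    (G := fun x l => x ⟨_, hfuture l⟩) (measurable_pi_lambda _ fun _ => measurable_pi_apply _)
    hS

end Blocks

lemma ENNReal.toReal_le_toReal_add_mul_of_le {A B : ℝ≥0∞} {m : ℕ} {β : ℝ} (hB : B ≠ ⊤)
    (hβ : 0 ≤ β) (h : A ≤ B + m * ENNReal.ofReal β) : A.toReal ≤ B.toReal + m * β := by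
  have hfin : B + m * ENNReal.ofReal β ≠ ⊤ := by finiteness
  calc A.toReal ≤ (B + m * ENNReal.ofReal β).toReal := ENNReal.toReal_mono hfin h
    _ = B.toReal + m * β := by
      rw [ENNReal.toReal_add hB (by finiteness), ENNReal.toReal_mul, ENNReal.toReal_natCast,
        ENNReal.toReal_ofReal hβ]

lemma measurableSet_setOf_exists_mem_finset {α ι : Type*} [MeasurableSpace α] (s : Finset ι)
    {p : ι → α → Prop} (hp : ∀ i ∈ s, MeasurableSet {x | p i x}) :
    MeasurableSet {x | ∃ i ∈ s, p i x} := by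
  convert s.measurableSet_biUnion hp using 1
  ext
  simp

theorem block_coupling_deviation_general
    {Ω 𝒵 : Type*} [MeasurableSpace Ω] [MeasurableSpace 𝒵]
    (P : Measure Ω) [IsProbabilityMeasure P]
    (Z : ℤ → Ω → 𝒵) (hZmeas : ∀ t, Measurable (Z t))
    (hstat : Stationary P Z)
    (a μ : ℕ) (hμ : 1 ≤ μ)
    (ℱ : Finset (𝒵 → ℝ))
    (hFmeas : ∀ f ∈ ℱ, Measurable f)
    (k : ℕ) (hk : k = 1 ∨ k = 2)
    (ε : ℝ)
    (νb : Measure (Fin a → 𝒵)) [IsProbabilityMeasure νb]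
    (hνb : νb = P.map (fun ω => fun i : Fin a => Z (((i : ℕ) + 1 : ℕ) : ℤ) ω)) :
    (P {ω | ∃ f ∈ ℱ,
        ∫ ω', f (Z 1 ω') ∂P
          - (1 / μ) * ∑ j : Fin μ, (1 / a) *
              ∑ i : Fin a, f (Z ((a * (k + 2 * (j : ℕ) - 1) + (i : ℕ) + 1 : ℕ) : ℤ) ω)
          ≥ ε}).toReal
      ≤ (Measure.pi (fun _ : Fin μ => νb) {x | ∃ f ∈ ℱ,
          ∫ ω', f (Z 1 ω') ∂P
            - (1 / μ) * ∑ j : Fin μ, (1 / a) * ∑ i : Fin a, f (x j i)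
            ≥ ε}).toReal
        + ((μ : ℝ) - 1) * betaMix P Z a := by
  obtain ⟨m, rfl⟩ := Nat.exists_eq_add_of_le' hμ
  set c : ℕ → ℕ := fun j => a * (k + 2 * j - 1)
  have hc : ∀ i j, i < j → c i + 2 * a ≤ c j := fun i j hij =>
    calc c i + 2 * a = a * (k + 2 * i - 1 + 2) := by ring
      _ ≤ c j := Nat.mul_le_mul_left a (by omega)
  set S := {x : Fin (m + 1) → Fin a → 𝒵 | ∃ f ∈ ℱ,
      ∫ ω', f (Z 1 ω') ∂P
        - (1 / ((m + 1 : ℕ) : ℝ)) * ∑ j : Fin (m + 1), (1 / a) * ∑ i : Fin a, f (x j i) ≥ ε}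
  have hS : MeasurableSet S := by
    refine measurableSet_setOf_exists_mem_finset ℱ fun f hf => measurableSet_le measurable_const ?_
    have := hFmeas f hf
    fun_prop
  have key := map_pi_apply_le_pi_apply_add_mul (X := fun j => block Z a (c j))
    (fun j => measurable_block hZmeas a _) (fun j => (hstat.map_block hZmeas a _).trans hνb.symm)
    (fun j _ hS => map_block_apply_le_prod_apply_add_betaMix hZmeas hc j hS) m hS
  rw [Measure.map_apply (measurable_pi_lambda _ fun _ => measurable_block hZmeas a _) hS] at key
  have := ENNReal.toReal_le_toReal_add_mul_of_le (measure_ne_top _ _) (betaMix_nonneg P Z a) key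
  have hcoef : ((m + 1 : ℕ) : ℝ) - 1 = m := by push_cast; ring
  rw [hcoef]
  exact this

/-- Coupling step for the block decomposition (proof of Theorem 2): the probability
that some `f ∈ ℱ` has a large deviation on the blocks `B_{k+2j}`, `j = 0, …, μ-1`
(with `k ∈ {1,2}`), is at most the corresponding probability for independent blocks
(under the product measure `Measure.pi` of the common block law `νb`) plus
`(μ-1)·β(a)`.  Here `h_f(B_j) = (1/a) ∑_{i=1}^a f (Z (a(j-1)+i))` and
`L f = E[f (Z 1)]`. -/
theorem block_coupling_deviation
    {Ω 𝒵 : Type*} [MeasurableSpace Ω] [MeasurableSpace 𝒵]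
    (P : Measure Ω) [IsProbabilityMeasure P]
    (Z : ℤ → Ω → 𝒵) (hZmeas : ∀ t, Measurable (Z t))
    (hstat : Stationary P Z)
    (a μ : ℕ) (ha : 1 ≤ a) (hμ : 1 ≤ μ)
    (n : ℕ) (hn : n = 2 * a * μ)
    (M : ℝ) (hM : 0 < M)
    (ℱ : Finset (𝒵 → ℝ))
    (hFmeas : ∀ f ∈ ℱ, Measurable f)
    (hFbdd : ∀ f ∈ ℱ, ∀ z, f z ∈ Set.Icc (0 : ℝ) M)
    (k : ℕ) (hk : k = 1 ∨ k = 2)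
    (ε : ℝ) (hε : 0 < ε)
    (νb : Measure (Fin a → 𝒵)) [IsProbabilityMeasure νb]
    (hνb : νb = P.map (fun ω => fun i : Fin a => Z (((i : ℕ) + 1 : ℕ) : ℤ) ω)) :
    (P {ω | ∃ f ∈ ℱ,
        ∫ ω', f (Z 1 ω') ∂P
          - (1 / μ) * ∑ j : Fin μ, (1 / a) *
              ∑ i : Fin a, f (Z ((a * (k + 2 * (j : ℕ) - 1) + (i : ℕ) + 1 : ℕ) : ℤ) ω)
          ≥ ε}).toReal
      ≤ (Measure.pi (fun _ : Fin μ => νb) {x | ∃ f ∈ ℱ,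
          ∫ ω', f (Z 1 ω') ∂P
            - (1 / μ) * ∑ j : Fin μ, (1 / a) * ∑ i : Fin a, f (x j i)
            ≥ ε}).toReal
        + ((μ : ℝ) - 1) * betaMix P Z a :=
  block_coupling_deviation_general P Z hZmeas hstat a μ hμ ℱ hFmeas k hk ε νb hνb
end

section
/- Let L, L̂, M, A be nonnegative real numbers and μ' > 0. If L ≤ L̂ + √(2·M·A·L / μ') + 2·M·A / (3·μ'), then L ≤ L̂ + √(2·M·A·L̂ / μ') + 4·M·A / μ'. -/
/-- If `L ≤ L̂ + √(2MA·L/μ') + 2MA/(3μ')` with nonnegative `L, L̂, M, A` and `μ' > 0`,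
then `L ≤ L̂ + √(2MA·L̂/μ') + 4MA/μ'`. -/
theorem fast_rate_self_bounding_step (L Lhat M A μ' : ℝ)
    (hL : 0 ≤ L) (hLhat : 0 ≤ Lhat) (hM : 0 ≤ M) (hA : 0 ≤ A) (hμ' : 0 < μ')
    (h : L ≤ Lhat + Real.sqrt (2 * M * A * L / μ') + 2 * M * A / (3 * μ')) :
    L ≤ Lhat + Real.sqrt (2 * M * A * Lhat / μ') + 4 * M * A / μ' := by
  have hc : (0:ℝ) ≤ 2 * M * A / μ' := by positivity
  set u := Real.sqrt (2 * M * A / μ') with hu_def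
  set s := Real.sqrt L with hs_def
  set t := Real.sqrt Lhat with ht_def
  have hu : 0 ≤ u := Real.sqrt_nonneg _
  have hs : 0 ≤ s := Real.sqrt_nonneg _
  have ht : 0 ≤ t := Real.sqrt_nonneg _
  have hu2 : u ^ 2 = 2 * M * A / μ' := Real.sq_sqrt hc
  have hs2 : s ^ 2 = L := Real.sq_sqrt hL
  have ht2 : t ^ 2 = Lhat := Real.sq_sqrt hLhat
  have h1 : Real.sqrt (2 * M * A * L / μ') = u * s := by
    rw [hu_def, hs_def, ← Real.sqrt_mul hc]
    ring_nf
  have h2 : Real.sqrt (2 * M * A * Lhat / μ') = u * t := by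
    rw [hu_def, ht_def, ← Real.sqrt_mul hc]
    ring_nf
  rw [h1] at h
  rw [h2]
  have h' : s ^ 2 ≤ t ^ 2 + u * s + u ^ 2 / 3 := by
    have e : 2 * M * A / (3 * μ') = 2 * M * A / μ' / 3 := by ring
    rw [hs2, ht2, hu2]; linarith [e ▸ h]
  have key : s ≤ t + 5 * u / 3 := by
    by_contra hk
    push_neg at hk
    nlinarith [mul_nonneg hu ht, mul_nonneg hs ht, mul_nonneg hu hs,
      sq_nonneg (s - t - 5 * u / 3), sq_nonneg u, sq_nonneg (s - t)]
  have hfin : s ^ 2 ≤ t ^ 2 + u * t + 2 * u ^ 2 := by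
    nlinarith [mul_nonneg hu (sub_nonneg.2 key)]
  rw [← hs2, ← ht2]
  have : 4 * M * A / μ' = 2 * u ^ 2 := by rw [hu2]; ring
  rw [this]
  linarith
end
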